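/- Let P, Q : [0,1] → R be polygonal curves with d_F(Q, P) ≤ δ realized by a monotone traversal φ, and assume Q(t) lies in the closed interval with endpoints Q(0) and Q(1) for all t ∈ [0,1]. If no inner vertex of Q δ-visits an inner vertex of P under φ, then the single line segment Q' from Q(0) to Q(1) is a range-preserving δ-simplification of Q and satisfies d_F(Q', P) ≤ δ. -/

import Mathlib

/-! By reflection we may assume `q 0 ≤ q k`, so that `Q` stays in `[q 0, q k]`. Everything then
rests on `Q` and `P` being `2δ`-approximately increasing (`ApproxInc (2 * δ)`).

Indeed, a continuous curve `R` that is `2δ`-approximately increasing, starts within `δ` of `A`,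
ends within `δ` of `B ≥ A` and stays in `[A - δ, B + δ]` is within Fréchet distance `δ` of the
segment from `A` to `B`: the running maximum of `R`, lowered by `δ` and cut off below at `A`,
yields a monotone parametrization of the segment that stays within `δ` of `R`.

Approximate monotonicity is where the hypothesis on visits enters. If one of the curves dropped by
more than `2δ` between two vertices, take the largest such drop. Its extremality keeps everything
away from the endpoints, and following the drop through the traversal produces an inner vertex of
`P` matched next to an inner vertex of `Q` within distance `δ` of it, that is, a visit. -/

/-- Continuous Fréchet distance between curves on the unit interval. -/
noncomputable def frechetDist {E : Type*} [PseudoMetricSpace E] (P Q : unitInterval → E) : ℝ :=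
  sInf {r : ℝ | ∃ f g : unitInterval → unitInterval,
    Continuous f ∧ Monotone f ∧ Function.Surjective f ∧
    Continuous g ∧ Monotone g ∧ Function.Surjective g ∧
    ∀ t, dist (P (f t)) (Q (g t)) ≤ r}

/-- The directed line segment from `a` to `b`, parametrized linearly. -/
noncomputable def segCurve {E : Type*} [AddCommGroup E] [Module ℝ E] (a b : E) :
    unitInterval → E :=
  fun t => (1 - (t : ℝ)) • a + (t : ℝ) • b

/-- The polygonal curve with `n+1` vertices `p 0, …, p n`, parametrized uniformly. -/
noncomputable def polyCurve {E : Type*} [AddCommGroup E] [Module ℝ E]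
    (n : ℕ) (p : Fin (n + 1) → E) (t : unitInterval) : E :=
  let x : ℝ := (t : ℝ) * n
  let i : ℕ := min (Nat.floor x) (n - 1)
  (1 - (x - (i : ℝ))) • p ⟨min i n, Nat.lt_succ_of_le (min_le_right i n)⟩ +
    (x - (i : ℝ)) • p ⟨min (i + 1) n, Nat.lt_succ_of_le (min_le_right (i + 1) n)⟩

/-- The subcurve `Q[a,b]`, linearly reparametrized over the unit interval. -/
noncomputable def subcurve {E : Type*} (Q : unitInterval → E) (a b : unitInterval) :
    unitInterval → E :=
  fun s => Q ⟨(1 - (s : ℝ)) * (a : ℝ) + (s : ℝ) * (b : ℝ), Set.mem_Icc.mpr ⟨by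
      have hs0 := unitInterval.nonneg s; have hs1 := unitInterval.le_one s
      have ha0 := unitInterval.nonneg a; have hb0 := unitInterval.nonneg b
      have h1 : (0:ℝ) ≤ (1 - (s:ℝ)) * (a:ℝ) := mul_nonneg (by linarith) ha0
      have h2 : (0:ℝ) ≤ (s:ℝ) * (b:ℝ) := mul_nonneg hs0 hb0
      linarith, by
      have hs0 := unitInterval.nonneg s; have hs1 := unitInterval.le_one s
      have ha1 := unitInterval.le_one a; have hb1 := unitInterval.le_one b
      have h1 : (1 - (s:ℝ)) * (a:ℝ) ≤ (1 - (s:ℝ)) * 1 :=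
        mul_le_mul_of_nonneg_left ha1 (by linarith)
      have h2 : (s:ℝ) * (b:ℝ) ≤ (s:ℝ) * 1 := mul_le_mul_of_nonneg_left hb1 hs0
      linarith⟩⟩

/-- The parameter (in the uniform parametrization) of the `i`-th vertex of a
polygonal curve with `n` edges. -/
noncomputable def vparam (n : ℕ) (i : Fin (n + 1)) : unitInterval :=
  ⟨((i : ℕ) : ℝ) / (n : ℝ), Set.mem_Icc.mpr ⟨by positivity, by
    have h1 : ((i : ℕ) : ℝ) ≤ (n : ℝ) := by exact_mod_cast Nat.lt_succ_iff.mp i.isLt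
    rcases Nat.eq_zero_or_pos n with h | h
    · subst h; simp
    · rw [div_le_one (by exact_mod_cast h)]; exact h1⟩⟩

/-- `P` is `c`-monotone increasing. -/
def ApproxInc (c : ℝ) (P : unitInterval → ℝ) : Prop :=
  ∀ s t : unitInterval, s ≤ t → P s - c ≤ P t

/-- `P` is `c`-monotone decreasing. -/
def ApproxDec (c : ℝ) (P : unitInterval → ℝ) : Prop :=
  ∀ s t : unitInterval, s ≤ t → P t ≤ P s + c

/-- `P` is `c`-monotone. -/
def ApproxMono (c : ℝ) (P : unitInterval → ℝ) : Prop :=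
  ApproxInc c P ∨ ApproxDec c P

/-- Concatenation of two curves (first on `[0,1/2]`, second on `[1/2,1]`). -/
noncomputable def concatC {E : Type*} (P Q : unitInterval → E) : unitInterval → E :=
  fun t =>
    if h : (t : ℝ) ≤ 1 / 2 then
      P ⟨2 * (t : ℝ), Set.mem_Icc.mpr ⟨by have := unitInterval.nonneg t; linarith,
        by linarith⟩⟩
    else
      Q ⟨2 * (t : ℝ) - 1, Set.mem_Icc.mpr ⟨by push_neg at h; linarith,
        by have := unitInterval.le_one t; linarith⟩⟩

/-- The data of a `δ`-straightening of the curve `Q`: parameters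
`0 = t 0 < … < t (Fin.last ℓ) = 1` such that each shortcut segment is within
Fréchet distance `δ` of the corresponding subcurve (locality), and each
corresponding subcurve stays in the closed interval spanned by the shortcut's
endpoints (edge-range-preserving). -/
def StraighteningData (δ : ℝ) (Q : unitInterval → ℝ) (ℓ : ℕ)
    (t : Fin (ℓ + 1) → unitInterval) : Prop :=
  StrictMono t ∧ t 0 = 0 ∧ t (Fin.last ℓ) = 1 ∧
    ∀ i : Fin ℓ,
      frechetDist (segCurve (Q (t i.castSucc)) (Q (t i.succ)))
          (subcurve Q (t i.castSucc) (t i.succ)) ≤ δ ∧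
      ∀ s : unitInterval, t i.castSucc ≤ s → s ≤ t i.succ →
        Q s ∈ Set.uIcc (Q (t i.castSucc)) (Q (t i.succ))

/-- `Q'` is a `δ`-straightening of `Q`. -/
def IsStraightening (δ : ℝ) (Q Q' : unitInterval → ℝ) : Prop :=
  ∃ (ℓ : ℕ) (t : Fin (ℓ + 1) → unitInterval),
    StraighteningData δ Q ℓ t ∧ Q' = polyCurve ℓ (fun i => Q (t i))

/-- The data of a `δ`-signature of the curve `Q`: parameters
`0 = t 0 < … < t (Fin.last ℓ) = 1` with the locality property, non-degenerate
vertex-range-preserving interior vertices, and the `δ`-edge-length property. -/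
def SignatureData (δ : ℝ) (Q : unitInterval → ℝ) (ℓ : ℕ)
    (t : Fin (ℓ + 1) → unitInterval) : Prop :=
  StrictMono t ∧ t 0 = 0 ∧ t (Fin.last ℓ) = 1 ∧
    (∀ i : Fin ℓ,
      frechetDist (segCurve (Q (t i.castSucc)) (Q (t i.succ)))
          (subcurve Q (t i.castSucc) (t i.succ)) ≤ δ) ∧
    (∀ i : ℕ, ∀ _h1 : 0 < i, ∀ _h2 : i < ℓ,
      (Q (t ⟨i - 1, by omega⟩) < Q (t ⟨i, by omega⟩) ∧
        Q (t ⟨i + 1, by omega⟩) < Q (t ⟨i, by omega⟩) ∧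
        ∀ s : unitInterval, t ⟨i - 1, by omega⟩ ≤ s → s ≤ t ⟨i + 1, by omega⟩ →
          Q s ≤ Q (t ⟨i, by omega⟩)) ∨
      (Q (t ⟨i, by omega⟩) < Q (t ⟨i - 1, by omega⟩) ∧
        Q (t ⟨i, by omega⟩) < Q (t ⟨i + 1, by omega⟩) ∧
        ∀ s : unitInterval, t ⟨i - 1, by omega⟩ ≤ s → s ≤ t ⟨i + 1, by omega⟩ →
          Q (t ⟨i, by omega⟩) ≤ Q s)) ∧
    (∀ _h : 1 ≤ ℓ,
      δ < |Q (t ⟨1, by omega⟩) - Q (t 0)| ∧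
      δ < |Q (t (Fin.last ℓ)) - Q (t ⟨ℓ - 1, by omega⟩)|) ∧
    (∀ j : ℕ, ∀ _hj1 : 1 ≤ j, ∀ _hj2 : j + 2 ≤ ℓ,
      2 * δ < |Q (t ⟨j + 1, by omega⟩) - Q (t ⟨j, by omega⟩)|)

/-- `Q'` is a `δ`-signature of `Q`. -/
def IsSignature (δ : ℝ) (Q Q' : unitInterval → ℝ) : Prop :=
  ∃ (ℓ : ℕ) (t : Fin (ℓ + 1) → unitInterval),
    SignatureData δ Q ℓ t ∧ Q' = polyCurve ℓ (fun i => Q (t i))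

/-- Vertex `j` of the polygonal curve on `q` `δ`-visits vertex `a` of the
polygonal curve on `p` under the monotone traversal `(f, g)`: they are within
distance `δ`, and the traversal matches one of them to the other vertex or to the
interior of an edge incident to it. -/
def Visits (δ : ℝ) (m k : ℕ) (p : Fin (m + 1) → ℝ) (q : Fin (k + 1) → ℝ)
    (f g : unitInterval → unitInterval) (j : Fin (k + 1)) (a : Fin (m + 1)) : Prop :=
  |q j - p a| ≤ δ ∧
    ((∃ t : unitInterval, g t = vparam k j ∧ |(f t : ℝ) * (m : ℝ) - ((a : ℕ) : ℝ)| < 1) ∨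
     (∃ t : unitInterval, f t = vparam m a ∧ |(g t : ℝ) * (k : ℝ) - ((j : ℕ) : ℝ)| < 1))

section Polygonal

variable {E : Type*} [AddCommGroup E] [Module ℝ E] {n : ℕ}

theorem polyCurve_of_mem_edge (p : Fin (n + 1) → E) {i : ℕ} (hi : i + 1 ≤ n) {t : unitInterval}
    (h₁ : (i : ℝ) ≤ t * n) (h₂ : (t : ℝ) * n ≤ i + 1) :
    polyCurve n p t =
      (1 - ((t : ℝ) * n - i)) • p ⟨i, by omega⟩ + ((t : ℝ) * n - i) • p ⟨i + 1, by omega⟩ := by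
  have hx₀ : (0 : ℝ) ≤ t * n := (Nat.cast_nonneg i).trans h₁
  rcases h₂.lt_or_eq with h₂ | h₂
  · have hfl : ⌊(t : ℝ) * n⌋₊ = i := (Nat.floor_eq_iff hx₀).2 ⟨h₁, h₂⟩
    simp only [polyCurve, hfl, min_eq_left (by omega : i ≤ n - 1), min_eq_left (by omega : i ≤ n),
      min_eq_left hi]
  · -- at the vertex `i + 1` the definition uses the following edge, if there is one
    have hfl : ⌊(t : ℝ) * n⌋₊ = i + 1 := by rw [h₂]; exact_mod_cast Nat.floor_natCast (i + 1)
    rcases (by omega : i + 1 ≤ n - 1 ∨ i + 1 = n) with hlt | heq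
    · have e₀ : (t : ℝ) * n - ((i + 1 : ℕ) : ℝ) = 0 := by push_cast; linarith
      have e₁ : (t : ℝ) * n - i = 1 := by linarith
      simp only [polyCurve, hfl, min_eq_left hlt, min_eq_left (by omega : i + 1 ≤ n), e₀, e₁]
      simp
    · simp only [polyCurve, hfl, (by omega : min (i + 1) (n - 1) = i),
        min_eq_left (by omega : i ≤ n), min_eq_left hi]

theorem exists_mem_edge (hn : 0 < n) (t : unitInterval) :
    ∃ i : ℕ, i + 1 ≤ n ∧ (i : ℝ) ≤ t * n ∧ (t : ℝ) * n ≤ i + 1 := by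
  have hx₀ : (0 : ℝ) ≤ t * n := mul_nonneg t.2.1 n.cast_nonneg
  have hxn : (t : ℝ) * n ≤ n := mul_le_of_le_one_left n.cast_nonneg t.2.2
  rcases lt_or_ge ⌊(t : ℝ) * n⌋₊ n with h | h
  · exact ⟨_, h, Nat.floor_le hx₀, (Nat.lt_floor_add_one _).le⟩
  · have : (n : ℝ) ≤ t * n := (Nat.cast_le.2 h).trans (Nat.floor_le hx₀)
    refine ⟨n - 1, by omega, ?_, ?_⟩ <;> rw [Nat.cast_sub hn, Nat.cast_one] <;> linarith

theorem exists_mem_edge_of_lt_one (hn : 0 < n) {t : unitInterval} (ht : t < 1) :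
    ∃ i : ℕ, i < n ∧ (i : ℝ) ≤ t * n ∧ (t : ℝ) * n < i + 1 := by
  have hx₀ : (0 : ℝ) ≤ t * n := mul_nonneg t.2.1 n.cast_nonneg
  exact ⟨_, (Nat.floor_lt hx₀).2 (mul_lt_of_lt_one_left (by exact_mod_cast hn) ht),
    Nat.floor_le hx₀, Nat.lt_floor_add_one _⟩

theorem polyCurve_eq_sum_hat (hn : 0 < n) (p : Fin (n + 1) → E) (t : unitInterval) :
    polyCurve n p t = ∑ j : Fin (n + 1), max 0 (1 - |(t : ℝ) * n - (j : ℕ)|) • p j := by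
  obtain ⟨i, hi, h₁, h₂⟩ := exists_mem_edge hn t
  rw [polyCurve_of_mem_edge p hi h₁ h₂, Finset.sum_eq_add ⟨i, by omega⟩ ⟨i + 1, by omega⟩
    (by simp [Fin.ext_iff]) _ (by simp) (by simp)]
  · congr 2
    · rw [abs_of_nonneg (by linarith), max_eq_right (by linarith)]
    · rw [abs_of_nonpos (by push_cast; linarith), max_eq_right (by push_cast; linarith)]
      push_cast; ring
  · intro c _ hc
    have hc' : (c : ℕ) + 1 ≤ i ∨ i + 2 ≤ (c : ℕ) := by
      simp only [ne_eq, Fin.ext_iff] at hc; omega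
    have : 1 ≤ |(t : ℝ) * n - (c : ℕ)| := by
      rcases hc' with h | h
      · have : ((c : ℕ) : ℝ) + 1 ≤ i := by exact_mod_cast h
        rw [abs_of_nonneg] <;> linarith
      · have : (i : ℝ) + 2 ≤ (c : ℕ) := by exact_mod_cast h
        rw [abs_of_nonpos] <;> linarith
    rw [max_eq_left (by linarith), zero_smul]

theorem continuous_polyCurve [TopologicalSpace E] [IsTopologicalAddGroup E] [ContinuousSMul ℝ E]
    (hn : 0 < n) (p : Fin (n + 1) → E) : Continuous (polyCurve n p) := by
  simp_rw [funext (polyCurve_eq_sum_hat hn p)]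
  fun_prop

theorem vparam_mul (hn : 0 < n) (j : Fin (n + 1)) : (vparam n j : ℝ) * n = j :=
  div_mul_cancel₀ _ (Nat.cast_ne_zero.2 hn.ne')

theorem polyCurve_vparam (hn : 0 < n) (p : Fin (n + 1) → E) (j : Fin (n + 1)) :
    polyCurve n p (vparam n j) = p j := by
  rw [polyCurve_eq_sum_hat hn, vparam_mul hn, Finset.sum_eq_single j _ (by simp)]
  · simp
  · intro c _ hc
    have : 1 ≤ |((j : ℕ) : ℝ) - (c : ℕ)| := by
      have : ((j : ℕ) : ℤ) - (c : ℕ) ≠ 0 := by have := Fin.val_ne_of_ne hc; omega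
      exact_mod_cast Int.one_le_abs this
    rw [max_eq_left (by linarith), zero_smul]

theorem vparam_le_iff (hn : 0 < n) {j : Fin (n + 1)} {t : unitInterval} :
    vparam n j ≤ t ↔ (j : ℝ) ≤ t * n := by
  rw [← Subtype.coe_le_coe, ← vparam_mul hn j,
    mul_le_mul_iff_of_pos_right (Nat.cast_pos.2 hn)]

theorem le_vparam_iff (hn : 0 < n) {j : Fin (n + 1)} {t : unitInterval} :
    t ≤ vparam n j ↔ (t : ℝ) * n ≤ j := by
  rw [← Subtype.coe_le_coe, ← vparam_mul hn j,
    mul_le_mul_iff_of_pos_right (Nat.cast_pos.2 hn)]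

theorem vparam_mono (hn : 0 < n) : Monotone (vparam n) := fun i j hij => by
  rw [vparam_le_iff hn, vparam_mul hn]; exact_mod_cast hij

theorem vparam_zero : vparam n 0 = 0 := by ext; simp [vparam]

theorem vparam_last (hn : 0 < n) : vparam n (Fin.last n) = 1 := by
  ext; simp [vparam, (Nat.cast_pos.2 hn).ne']

theorem polyCurve_zero (hn : 0 < n) (p : Fin (n + 1) → E) : polyCurve n p 0 = p 0 := by
  rw [← vparam_zero, polyCurve_vparam hn]

theorem polyCurve_one (hn : 0 < n) (p : Fin (n + 1) → E) :
    polyCurve n p 1 = p (Fin.last n) := by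
  rw [← vparam_last hn, polyCurve_vparam hn]

theorem polyCurve_neg (p : Fin (n + 1) → E) : polyCurve n (-p) = -polyCurve n p := by
  ext t
  simp only [polyCurve, Pi.neg_apply, smul_neg, neg_add]

end Polygonal

section RealPolygonal

variable {n : ℕ} (p : Fin (n + 1) → ℝ)

theorem polyCurve_sub_polyCurve_of_mem_edge {i : ℕ} (hi : i + 1 ≤ n) {s t : unitInterval}
    (hs₁ : (i : ℝ) ≤ s * n) (hs₂ : (s : ℝ) * n ≤ i + 1)
    (ht₁ : (i : ℝ) ≤ t * n) (ht₂ : (t : ℝ) * n ≤ i + 1) :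
    polyCurve n p t - polyCurve n p s =
      ((t : ℝ) * n - s * n) * (p ⟨i + 1, by omega⟩ - p ⟨i, by omega⟩) := by
  rw [polyCurve_of_mem_edge p hi ht₁ ht₂, polyCurve_of_mem_edge p hi hs₁ hs₂, smul_eq_mul,
    smul_eq_mul, smul_eq_mul, smul_eq_mul]
  ring

theorem exists_adjacent_vertex_le (hn : 0 < n) (t : unitInterval) :
    ∃ j : Fin (n + 1), |(t : ℝ) * n - (j : ℕ)| < 1 ∧ p j ≤ polyCurve n p t := by
  obtain ⟨i, hi, h₁, h₂⟩ := exists_mem_edge hn t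
  have hval := polyCurve_of_mem_edge p hi h₁ h₂
  simp only [smul_eq_mul] at hval
  have adj₀ : (t : ℝ) * n < i + 1 → |(t : ℝ) * n - i| < 1 := fun h => by
    rw [abs_lt]; constructor <;> linarith
  have adj₁ : (i : ℝ) < t * n → |(t : ℝ) * n - ((i + 1 : ℕ) : ℝ)| < 1 := fun h => by
    rw [abs_lt]; push_cast; constructor <;> linarith
  rcases le_total (p ⟨i, by omega⟩) (p ⟨i + 1, by omega⟩) with hle | hle
  · rcases h₂.lt_or_eq with h₂ | h₂
    · exact ⟨⟨i, by omega⟩, adj₀ h₂, by rw [hval]; nlinarith⟩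
    · exact ⟨⟨i + 1, by omega⟩, adj₁ (by linarith), by rw [hval, h₂]; simp⟩
  · rcases h₁.lt_or_eq with h₁ | h₁
    · exact ⟨⟨i + 1, by omega⟩, adj₁ h₁, by rw [hval]; nlinarith⟩
    · exact ⟨⟨i, by omega⟩, adj₀ (by linarith), by rw [hval, ← h₁]; simp⟩

theorem exists_adjacent_vertex_ge (hn : 0 < n) (t : unitInterval) :
    ∃ j : Fin (n + 1), |(t : ℝ) * n - (j : ℕ)| < 1 ∧ polyCurve n p t ≤ p j := by
  obtain ⟨j, hj, hle⟩ := exists_adjacent_vertex_le (-p) hn t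
  exact ⟨j, hj, by simpa [polyCurve_neg] using hle⟩

theorem polyCurve_le_of_forall_le (hn : 0 < n) {j : Fin (n + 1)} {M : ℝ}
    (hM : ∀ l ≤ j, p l ≤ M) {s : unitInterval} (hs : s ≤ vparam n j) : polyCurve n p s ≤ M := by
  obtain ⟨l, hl, hle⟩ := exists_adjacent_vertex_ge p hn s
  rw [le_vparam_iff hn] at hs
  have : ((l : ℕ) : ℝ) < j + 1 := by linarith [(abs_lt.1 hl).1]
  have : (l : ℕ) < j + 1 := by exact_mod_cast this
  exact hle.trans (hM l (Fin.le_iff_val_le_val.2 (by omega)))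

theorem exists_vertex_le_of_polyCurve_lt (hn : 0 < n) {s₀ s : unitInterval} (hs : s₀ ≤ s)
    (hlt : polyCurve n p s < polyCurve n p s₀) :
    ∃ a : Fin (n + 1), s₀ ≤ vparam n a ∧ p a ≤ polyCurve n p s := by
  obtain ⟨a, ha, hle⟩ := exists_adjacent_vertex_le p hn s
  by_cases h : s₀ ≤ vparam n a
  · exact ⟨a, h, hle⟩
  -- otherwise `s₀` and `s` lie on the edge from `a` on which `polyCurve` falls
  rw [le_vparam_iff hn, not_le] at h
  have hss : (s₀ : ℝ) * n ≤ s * n := mul_le_mul_of_nonneg_right hs n.cast_nonneg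
  have ha' : (s : ℝ) * n < a + 1 := by linarith [(abs_lt.1 ha).2]
  have hsn : (s : ℝ) * n ≤ n := mul_le_of_le_one_left n.cast_nonneg s.2.2
  have han : (a : ℕ) + 1 ≤ n := by
    have : ((a : ℕ) : ℝ) < n := by linarith
    exact_mod_cast this
  have hdiff := polyCurve_sub_polyCurve_of_mem_edge p han h.le (by linarith)
    (by linarith) ha'.le
  have hval := polyCurve_of_mem_edge p han (by linarith : ((a : ℕ) : ℝ) ≤ s * n) ha'.le
  rw [smul_eq_mul, smul_eq_mul] at hval
  have hfall : p ⟨a + 1, by omega⟩ < p a := by nlinarith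
  refine ⟨⟨a + 1, by omega⟩, (le_vparam_iff hn).2 (by push_cast; linarith), ?_⟩
  rw [hval]
  nlinarith

theorem approxInc_polyCurve (hn : 0 < n) {c : ℝ} (hp : ∀ i j, i ≤ j → p i - p j ≤ c) :
    ApproxInc c (polyCurve n p) := by
  intro s t hst
  obtain ⟨j, hj, hsj⟩ := exists_adjacent_vertex_ge p hn s
  obtain ⟨j', hj', hj't⟩ := exists_adjacent_vertex_le p hn t
  rcases le_or_gt j j' with hjj' | hjj'
  · linarith [hp j j' hjj']
  -- otherwise `s` and `t` lie on the edge from `j'` to `j`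
  have hss : (s : ℝ) * n ≤ t * n := mul_le_mul_of_nonneg_right hst n.cast_nonneg
  have hjj'' : ((j' : ℕ) : ℝ) + 1 ≤ (j : ℕ) := by exact_mod_cast hjj'
  have h₁ : ((j' : ℕ) : ℝ) < s * n := by linarith [(abs_lt.1 hj).1]
  have h₂ : (t : ℝ) * n < j' + 1 := by linarith [(abs_lt.1 hj').2]
  have hsucc : (j : ℕ) = j' + 1 := by
    have : ((j : ℕ) : ℝ) < j' + 2 := by linarith [(abs_lt.1 hj).1]
    have : (j : ℕ) < j' + 2 := by exact_mod_cast this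
    omega
  have hdiff := polyCurve_sub_polyCurve_of_mem_edge p (i := j') (by omega) h₁.le (by linarith)
    (by linarith) h₂.le
  have hc := hp ⟨j', by omega⟩ ⟨j' + 1, by omega⟩ (Fin.le_iff_val_le_val.2 (by simp))
  have hc₀ : 0 ≤ c := by simpa using hp j' j' le_rfl
  have hθ : (t : ℝ) * n - s * n ≤ 1 := by linarith
  rcases le_total (p ⟨j' + 1, by omega⟩) (p ⟨j', by omega⟩) with h | h <;> nlinarith

theorem rising_edge_upper_vertex (hn : 0 < n) {c : ℝ} (hp : ApproxInc c (polyCurve n p))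
    {i : ℕ} (hin : i < n) {x x₁ : unitInterval} (hxx₁ : x ≤ x₁)
    (hi₁ : (i : ℝ) ≤ x * n) (hi₂ : (x : ℝ) * n < i + 1)
    (hpi : p ⟨i, by omega⟩ < polyCurve n p x) (hx₁ : polyCurve n p x₁ < polyCurve n p x) :
    i + 1 < n ∧ |(x : ℝ) * n - (i + 1 : ℕ)| < 1 ∧
      polyCurve n p x ≤ p ⟨i + 1, by omega⟩ ∧ p ⟨i + 1, by omega⟩ - c ≤ polyCurve n p x₁ := by
  have hval := polyCurve_of_mem_edge p hin hi₁ hi₂.le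
  rw [smul_eq_mul, smul_eq_mul] at hval
  have hθ : (i : ℝ) < x * n := by
    refine hi₁.lt_of_ne fun h => ?_
    rw [hval, ← h] at hpi
    linarith
  have hrise : p ⟨i, by omega⟩ < p ⟨i + 1, by omega⟩ := by nlinarith
  have hxx₁' : (x : ℝ) * n ≤ x₁ * n := mul_le_mul_of_nonneg_right hxx₁ n.cast_nonneg
  have hx₁n : (i : ℝ) + 1 < x₁ * n := by
    by_contra! h
    have := polyCurve_sub_polyCurve_of_mem_edge p hin hi₁ hi₂.le (by linarith) h
    nlinarith
  have hin' : i + 1 < n := by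
    have : (x₁ : ℝ) * n ≤ n := mul_le_of_le_one_left n.cast_nonneg x₁.2.2
    have : ((i + 1 : ℕ) : ℝ) < n := by push_cast; linarith
    exact_mod_cast this
  refine ⟨hin', by rw [abs_lt]; push_cast; constructor <;> linarith, by rw [hval]; nlinarith, ?_⟩
  have hv : vparam n ⟨i + 1, by omega⟩ ≤ x₁ := (vparam_le_iff hn).2 (by push_cast; linarith)
  simpa [polyCurve_vparam hn] using hp _ _ hv

end RealPolygonal

section Monotone

variable {α β : Type*} [LinearOrder α] [PartialOrder β] {f : α → β}

theorem Monotone.exists_le_apply_eq (hf : Monotone f) (hs : Function.Surjective f) {a : α}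
    {b : β} (hb : b ≤ f a) : ∃ a' ≤ a, f a' = b := by
  obtain ⟨a', rfl⟩ := hs b
  rcases le_total a' a with h | h
  · exact ⟨a', h, rfl⟩
  · exact ⟨a, le_rfl, le_antisymm (hf h) hb⟩

theorem Monotone.exists_ge_apply_eq (hf : Monotone f) (hs : Function.Surjective f) {a : α}
    {b : β} (hb : f a ≤ b) : ∃ a' ≥ a, f a' = b :=
  hf.dual.exists_le_apply_eq hs hb

theorem Monotone.map_zero_of_surjective {f : unitInterval → unitInterval} (hf : Monotone f)
    (hs : Function.Surjective f) : f 0 = 0 := by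
  obtain ⟨a, ha⟩ := hs 0
  exact le_antisymm ((hf unitInterval.nonneg').trans_eq ha) unitInterval.nonneg'

theorem Monotone.map_one_of_surjective {f : unitInterval → unitInterval} (hf : Monotone f)
    (hs : Function.Surjective f) : f 1 = 1 := by
  obtain ⟨a, ha⟩ := hs 1
  exact le_antisymm unitInterval.le_one' (ha.symm.trans_le (hf unitInterval.le_one'))

end Monotone

structure IsTraversal (δ : ℝ) (P Q : unitInterval → ℝ) (f g : unitInterval → unitInterval) :
    Prop where
  monotone_left : Monotone f
  monotone_right : Monotone g
  surjective_left : Function.Surjective f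
  surjective_right : Function.Surjective g
  abs_sub_le : ∀ t, |P (f t) - Q (g t)| ≤ δ

namespace IsTraversal

variable {δ : ℝ} {P Q : unitInterval → ℝ} {f g : unitInterval → unitInterval}

theorem nonneg (hT : IsTraversal δ P Q f g) : 0 ≤ δ := (abs_nonneg _).trans (hT.abs_sub_le 0)

theorem abs_sub_le_zero (hT : IsTraversal δ P Q f g) : |P 0 - Q 0| ≤ δ := by
  simpa [hT.monotone_left.map_zero_of_surjective hT.surjective_left,
    hT.monotone_right.map_zero_of_surjective hT.surjective_right] using hT.abs_sub_le 0

theorem abs_sub_le_one (hT : IsTraversal δ P Q f g) : |P 1 - Q 1| ≤ δ := by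
  simpa [hT.monotone_left.map_one_of_surjective hT.surjective_left,
    hT.monotone_right.map_one_of_surjective hT.surjective_right] using hT.abs_sub_le 1

theorem neg (hT : IsTraversal δ P Q f g) : IsTraversal δ (-P) (-Q) f g :=
  { hT with
    abs_sub_le := fun t => by rw [Pi.neg_apply, Pi.neg_apply, neg_sub_neg, abs_sub_comm]
                              exact hT.abs_sub_le t }

theorem mem_Icc_left (hT : IsTraversal δ P Q f g) {lo hi : ℝ} (hQ : ∀ s, Q s ∈ Set.Icc lo hi)
    (s : unitInterval) : P s ∈ Set.Icc (lo - δ) (hi + δ) := by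
  obtain ⟨t, rfl⟩ := hT.surjective_left s
  have := abs_le.1 (hT.abs_sub_le t)
  have := hQ (g t)
  constructor <;> linarith [this.1, this.2]

end IsTraversal

def NoInnerVisits (δ : ℝ) (m k : ℕ) (p : Fin (m + 1) → ℝ) (q : Fin (k + 1) → ℝ)
    (f g : unitInterval → unitInterval) : Prop :=
  ∀ (j : Fin (k + 1)) (a : Fin (m + 1)),
    0 < (j : ℕ) → (j : ℕ) < k → 0 < (a : ℕ) → (a : ℕ) < m → ¬ Visits δ m k p q f g j a

theorem NoInnerVisits.neg {δ : ℝ} {m k : ℕ} {p : Fin (m + 1) → ℝ} {q : Fin (k + 1) → ℝ}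
    {f g : unitInterval → unitInterval} (h : NoInnerVisits δ m k p q f g) :
    NoInnerVisits δ m k (-p) (-q) f g := fun j a hj hjk ha ham hv =>
  h j a hj hjk ha ham ⟨by simpa only [Pi.neg_apply, neg_sub_neg, abs_sub_comm] using hv.1, hv.2⟩

theorem exists_maximal_drop {ι : Type*} [LinearOrder ι] [Finite ι] {u : ι → ℝ} {c : ℝ}
    (h : ∃ i j, i ≤ j ∧ c < u i - u j) :
    ∃ i j, i ≤ j ∧ c < u i - u j ∧ (∀ l ≤ j, u l ≤ u i) ∧ ∀ l, i ≤ l → u j ≤ u l := by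
  obtain ⟨i₀, j₀, h₀, hc⟩ := h
  obtain ⟨⟨i, j⟩, hij, hmax⟩ := Set.exists_max_image {x : ι × ι | x.1 ≤ x.2}
    (fun x => u x.1 - u x.2) (Set.toFinite _) ⟨(i₀, j₀), h₀⟩
  refine ⟨i, j, hij, hc.trans_le (hmax (i₀, j₀) h₀), fun l hl => ?_, fun l hl => ?_⟩
  · linarith [hmax (l, j) hl]
  · linarith [hmax (i, l) hl]

section NoInnerVisits

variable {δ : ℝ} {m k : ℕ} {p : Fin (m + 1) → ℝ} {q : Fin (k + 1) → ℝ}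
  {f g : unitInterval → unitInterval}

/-- If `Q` dropped by more than `2δ`, the traversal would have to make `P` follow the drop, and
the vertex of `P` reached at its bottom would be `δ`-visited by an inner vertex of `Q`. -/
theorem IsTraversal.right_vertex_drop_le (hm : 0 < m) (hk : 0 < k)
    (hT : IsTraversal δ (polyCurve m p) (polyCurve k q) f g)
    (hq : ∀ i, q 0 ≤ q i ∧ q i ≤ q (Fin.last k)) (hnv : NoInnerVisits δ m k p q f g) :
    ∀ i j, i ≤ j → q i - q j ≤ 2 * δ := by
  by_contra! h
  obtain ⟨j, j', hjj', hdrop, -, hmin⟩ := exists_maximal_drop h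
  have hδ := hT.nonneg
  obtain ⟨t', ht'⟩ := hT.surjective_right (vparam k j')
  obtain ⟨β, hβt', hβ⟩ := hT.monotone_right.exists_le_apply_eq hT.surjective_right
    (ht'.symm ▸ vparam_mono hk hjj')
  have hPβ := abs_le.1 (hT.abs_sub_le β)
  have hPt' := abs_le.1 (hT.abs_sub_le t')
  rw [hβ, polyCurve_vparam hk] at hPβ
  rw [ht', polyCurve_vparam hk] at hPt'
  obtain ⟨a, hβa, hpa⟩ :=
    exists_vertex_le_of_polyCurve_lt p hm (hT.monotone_left hβt') (by linarith)
  obtain ⟨t, hβt, hta⟩ := hT.monotone_left.exists_ge_apply_eq hT.surjective_left hβa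
  have hPt := abs_le.1 (hT.abs_sub_le t)
  rw [hta, polyCurve_vparam hm] at hPt
  obtain ⟨l, hl, hql⟩ := exists_adjacent_vertex_le q hk (g t)
  have hjl : j ≤ l := by
    have : vparam k j ≤ g t := hβ ▸ hT.monotone_right hβt
    rw [vparam_le_iff hk] at this
    have : ((j : ℕ) : ℝ) < l + 1 := by linarith [(abs_lt.1 hl).2]
    exact Fin.le_iff_val_le_val.2 (Nat.lt_succ_iff.1 (by exact_mod_cast this))
  have hql' := hmin l hjl
  refine hnv l a ?_ ?_ ?_ ?_ ⟨abs_le.2 ⟨by linarith, by linarith⟩, .inr ⟨t, hta, hl⟩⟩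
  · refine (Nat.pos_of_ne_zero fun h0 => ?_).trans_le hjl
    obtain rfl : j = 0 := Fin.ext h0
    linarith [(hq j').1]
  · refine Fin.val_lt_last fun hl => ?_
    subst hl
    linarith [(hq j).2]
  · refine Nat.pos_of_ne_zero fun h0 => ?_
    obtain rfl : a = 0 := Fin.ext h0
    rw [vparam_zero, le_zero_iff] at hβa
    rw [hβa, polyCurve_zero hm] at hPβ
    linarith
  · refine Fin.val_lt_last fun ha => ?_
    subst ha
    have := abs_le.1 hT.abs_sub_le_one
    rw [polyCurve_one hm, polyCurve_one hk] at this
    linarith [(hq j).2]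

/-- Take the largest drop of `P`, from `p a` to `p a'`. The vertex of `Q` starting the edge on
which `a` is matched lies below `p a + δ`. If it is not visited, `Q` rises there; as `Q` has to come
back down to within `δ` of `p a'`, its approximate monotonicity bounds the next vertex of `Q` too,
and that one is visited. -/
theorem IsTraversal.left_vertex_drop_le (hm : 0 < m) (hk : 0 < k)
    (hT : IsTraversal δ (polyCurve m p) (polyCurve k q) f g)
    (hQr : ∀ s, polyCurve k q s ∈ Set.Icc (q 0) (q (Fin.last k)))
    (hQinc : ApproxInc (2 * δ) (polyCurve k q)) (hnv : NoInnerVisits δ m k p q f g) :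
    ∀ a b, a ≤ b → p a - p b ≤ 2 * δ := by
  by_contra! h
  obtain ⟨a, a', haa', hdrop, hmax, -⟩ := exists_maximal_drop h
  have hδ := hT.nonneg
  have hpa' := (hT.mem_Icc_left hQr (vparam m a')).1
  rw [polyCurve_vparam hm] at hpa'
  have ha0 : 0 < (a : ℕ) := by
    refine Nat.pos_of_ne_zero fun h0 => ?_
    obtain rfl : a = 0 := Fin.ext h0
    have := abs_le.1 hT.abs_sub_le_zero
    rw [polyCurve_zero hm, polyCurve_zero hk] at this
    linarith
  have ham : (a : ℕ) < m := by
    have : a ≠ a' := by rintro rfl; linarith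
    exact (Fin.lt_def.1 (haa'.lt_of_ne this)).trans_le (Nat.lt_succ_iff.1 a'.2)
  obtain ⟨ta', hta'⟩ := hT.surjective_left (vparam m a')
  obtain ⟨ta, htata', hta⟩ := hT.monotone_left.exists_le_apply_eq hT.surjective_left
    (hta'.symm ▸ vparam_mono hm haa')
  have hx := abs_le.1 (hT.abs_sub_le ta)
  have hx₁ := abs_le.1 (hT.abs_sub_le ta')
  rw [hta, polyCurve_vparam hm] at hx
  rw [hta', polyCurve_vparam hm] at hx₁
  -- vertices of `Q` up to `g ta` are matched to points of `P` before `a'`, hence below `p a`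
  have hbefore : ∀ l, vparam k l ≤ g ta → q l ≤ p a + δ := by
    intro l hl
    obtain ⟨t, htta, htl⟩ := hT.monotone_right.exists_le_apply_eq hT.surjective_right hl
    have := abs_le.1 (hT.abs_sub_le t)
    rw [htl, polyCurve_vparam hk] at this
    have := polyCurve_le_of_forall_le p hm hmax
      ((hT.monotone_left htta).trans (hta.trans_le (vparam_mono hm haa')))
    linarith
  have hx1 : g ta < 1 := by
    refine lt_of_le_of_ne unitInterval.le_one' fun h1 => ?_
    have : g ta' = 1 := le_antisymm unitInterval.le_one' (h1 ▸ hT.monotone_right htata')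
    rw [h1] at hx
    rw [this] at hx₁
    linarith
  obtain ⟨i, hik, hi₁, hi₂⟩ := exists_mem_edge_of_lt_one hk hx1
  have hqi := hbefore ⟨i, by omega⟩ ((vparam_le_iff hk).2 hi₁)
  by_cases hlow : p a - δ ≤ q ⟨i, by omega⟩
  · refine hnv ⟨i, by omega⟩ a (Nat.pos_of_ne_zero fun h0 => ?_) hik ha0 ham
      ⟨abs_le.2 ⟨by linarith, by linarith⟩,
        .inr ⟨ta, hta, abs_lt.2 ⟨by linarith, by linarith⟩⟩⟩
    obtain rfl : i = 0 := h0
    linarith [show q ⟨0, by omega⟩ = q 0 from rfl]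
  · obtain ⟨hik', hadj, hup, hdown⟩ := rising_edge_upper_vertex q hk hQinc hik
      (hT.monotone_right htata') hi₁ hi₂ (by linarith) (by linarith)
    exact hnv ⟨i + 1, by omega⟩ a (Nat.succ_pos i) hik' ha0 ham
      ⟨abs_le.2 ⟨by linarith, by linarith⟩, .inr ⟨ta, hta, hadj⟩⟩

end NoInnerVisits

theorem frechetDist_le_of_forall_dist_le {E : Type*} [PseudoMetricSpace E]
    {P Q : unitInterval → E} {δ : ℝ} {f g : unitInterval → unitInterval}
    (hfc : Continuous f) (hfm : Monotone f) (hfs : Function.Surjective f)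
    (hgc : Continuous g) (hgm : Monotone g) (hgs : Function.Surjective g)
    (h : ∀ t, dist (P (f t)) (Q (g t)) ≤ δ) : frechetDist P Q ≤ δ :=
  csInf_le ⟨0, fun _ ⟨_, _, _, _, _, _, _, _, hr⟩ => dist_nonneg.trans (hr 0)⟩
    ⟨f, g, hfc, hfm, hfs, hgc, hgm, hgs, h⟩

theorem segCurve_neg {E : Type*} [AddCommGroup E] [Module ℝ E] (a b : E) :
    segCurve (-a) (-b) = -segCurve a b := by
  ext t
  simp only [segCurve, smul_neg, neg_add, Pi.neg_apply]

theorem frechetDist_neg {E : Type*} [SeminormedAddCommGroup E] (P Q : unitInterval → E) :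
    frechetDist (-P) (-Q) = frechetDist P Q := by
  simp only [frechetDist, Pi.neg_apply, dist_neg_neg]

theorem unitInterval.surjective_of_continuous {f : unitInterval → unitInterval}
    (hf : Continuous f) (h0 : f 0 = 0) (h1 : f 1 = 1) : Function.Surjective f := fun y => by
  have := intermediate_value_univ 0 1 hf
  rw [h0, h1] at this
  exact this ⟨unitInterval.nonneg', unitInterval.le_one'⟩

/-- `⨆ u ≤ τ, R u`, indexed by `min u τ` so that the index set is all of `[0, 1]`. -/
noncomputable def runningMax (R : unitInterval → ℝ) (τ : unitInterval) : ℝ :=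
  ⨆ u, R (min u τ)

section RunningMax

variable {R : unitInterval → ℝ}

theorem continuous_runningMax (hR : Continuous R) : Continuous (runningMax R) := by
  have := isCompact_univ.continuous_sSup (f := fun τ u => R (min u τ))
    (hR.comp (continuous_snd.min continuous_fst))
  simp only [Set.image_univ] at this
  exact this

theorem bddAbove_range_min (hR : Continuous R) (τ : unitInterval) :
    BddAbove (Set.range fun u => R (min u τ)) :=
  (isCompact_range (hR.comp (continuous_id.min continuous_const))).bddAbove

theorem le_runningMax (hR : Continuous R) (τ : unitInterval) : R τ ≤ runningMax R τ :=
  le_ciSup_of_le (bddAbove_range_min hR τ) τ (by rw [min_self])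

theorem runningMax_le {τ : unitInterval} {M : ℝ} (h : ∀ u ≤ τ, R u ≤ M) : runningMax R τ ≤ M :=
  ciSup_le fun u => h _ (min_le_right u τ)

theorem monotone_runningMax (hR : Continuous R) : Monotone (runningMax R) := fun τ τ' h =>
  runningMax_le fun u hu => le_ciSup_of_le (bddAbove_range_min hR τ') u
    (by rw [min_eq_left (hu.trans h)])

end RunningMax

theorem segCurve_projIcc {A B w : ℝ} (hAB : A < B) (hw : w ∈ Set.Icc A B) :
    segCurve A B (Set.projIcc 0 1 zero_le_one ((w - A) / (B - A))) = w := by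
  have hBA : 0 < B - A := sub_pos.2 hAB
  have hmem : (w - A) / (B - A) ∈ Set.Icc (0 : ℝ) 1 :=
    ⟨div_nonneg (by linarith [hw.1]) hBA.le, div_le_one_of_le₀ (by linarith [hw.2]) hBA.le⟩
  simp only [segCurve, Set.projIcc_of_mem _ hmem, smul_eq_mul]
  field_simp
  ring

theorem frechetDist_segCurve_le_of_monotone {A B δ : ℝ} (hAB : A < B) {R W : unitInterval → ℝ}
    {g : unitInterval → unitInterval} (hWc : Continuous W) (hWm : Monotone W) (hW0 : W 0 = A)
    (hW1 : W 1 = B) (hgc : Continuous g) (hgm : Monotone g) (hg0 : g 0 = 0) (hg1 : g 1 = 1)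
    (h : ∀ r, |W r - R (g r)| ≤ δ) : frechetDist (segCurve A B) R ≤ δ := by
  set f : unitInterval → unitInterval :=
    fun r => Set.projIcc 0 1 zero_le_one ((W r - A) / (B - A)) with hf
  have hfc : Continuous f := continuous_projIcc.comp (by fun_prop)
  have hfm : Monotone f := fun r r' hr => Set.monotone_projIcc _
    (div_le_div_of_nonneg_right (sub_le_sub_right (hWm hr) _) (sub_nonneg.2 hAB.le))
  have hf0 : f 0 = 0 := by ext; simp [hf, hW0]
  have hf1 : f 1 = 1 := by ext; simp [hf, hW1, (sub_pos.2 hAB).ne']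
  refine frechetDist_le_of_forall_dist_le hfc hfm
    (unitInterval.surjective_of_continuous hfc hf0 hf1) hgc hgm
    (unitInterval.surjective_of_continuous hgc hg0 hg1) fun r => ?_
  rw [segCurve_projIcc hAB ⟨hW0 ▸ hWm unitInterval.nonneg', hW1 ▸ hWm unitInterval.le_one'⟩,
    Real.dist_eq]
  exact h r

theorem frechetDist_segCurve_le_of_tracking {A B δ : ℝ} {R V : unitInterval → ℝ}
    (hVc : Continuous V) (hVm : Monotone V) (hV0 : V 0 = A) (hVB : ∀ τ, V τ ≤ B)
    (hVR : ∀ τ, |V τ - R τ| ≤ δ) (hR1 : |R 1 - B| ≤ δ) :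
    frechetDist (segCurve A B) R ≤ δ := by
  have hVA : ∀ τ, A ≤ V τ := fun τ => hV0 ▸ hVm unitInterval.nonneg'
  rcases (hV0 ▸ hVB 0 : A ≤ B).eq_or_lt with rfl | hAB
  · refine frechetDist_le_of_forall_dist_le continuous_id monotone_id Function.surjective_id
      continuous_id monotone_id Function.surjective_id fun t => ?_
    have hseg : segCurve A A t = A := by simp only [segCurve, smul_eq_mul]; ring
    rw [id, hseg, Real.dist_eq, ← le_antisymm (hVB t) (hVA t)]
    exact hVR t
  -- `g` runs through `R` at double speed while the segment follows `V`; then the segment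
  -- is completed from `V 1` to `B` while `g` rests at `1`
  set g : unitInterval → unitInterval := fun r => Set.projIcc 0 1 zero_le_one (2 * r) with hg
  set W : unitInterval → ℝ := fun r => V (g r) + (B - V 1) * max 0 (2 * (r : ℝ) - 1) with hW
  have hgm : Monotone g := fun r r' h =>
    Set.monotone_projIcc _ (mul_le_mul_of_nonneg_left (Subtype.coe_le_coe.2 h) zero_le_two)
  have hWm : Monotone W := fun r r' h => by
    have : max 0 (2 * (r : ℝ) - 1) ≤ max 0 (2 * (r' : ℝ) - 1) := by gcongr
    simp only [hW]
    nlinarith [hVB 1, hVm (hgm h)]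
  have hg1 : g 1 = 1 := by ext; simp [hg]
  refine frechetDist_segCurve_le_of_monotone hAB (by fun_prop) hWm (by simp [hW, hg, hV0])
    (by simp only [hW, hg1]; norm_num) (by fun_prop) hgm (by ext; simp [hg]) hg1 fun r => ?_
  rcases le_total (2 * (r : ℝ)) 1 with h | h
  · simp only [hW, max_eq_left (by linarith : 2 * (r : ℝ) - 1 ≤ 0), mul_zero, add_zero]
    exact hVR _
  · have hgr : g r = 1 := by ext; simp [hg, h]
    have hVW : V 1 ≤ W r := by
      simp only [hW, hgr]
      nlinarith [le_max_left 0 (2 * (r : ℝ) - 1), hVB 1]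
    have hWB : W r ≤ B := by
      simp only [hW, hgr]
      nlinarith [max_le (by linarith : (0 : ℝ) ≤ 1) (by linarith [r.2.2] : 2 * (r : ℝ) - 1 ≤ 1),
        hVB 1]
    have := abs_le.1 (hVR 1)
    have := abs_le.1 hR1
    rw [hgr, abs_le]
    constructor <;> linarith

theorem frechetDist_segCurve_le {A B δ : ℝ} {R : unitInterval → ℝ} (hRc : Continuous R)
    (hRinc : ApproxInc (2 * δ) R) (hAB : A ≤ B) (h0 : |R 0 - A| ≤ δ) (h1 : |R 1 - B| ≤ δ)
    (hR : ∀ t, R t ∈ Set.Icc (A - δ) (B + δ)) : frechetDist (segCurve A B) R ≤ δ := by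
  refine frechetDist_segCurve_le_of_tracking (V := fun τ => max A (runningMax R τ - δ))
    (continuous_const.max ((continuous_runningMax hRc).sub continuous_const))
    (fun τ τ' h => max_le_max le_rfl (sub_le_sub_right (monotone_runningMax hRc h) _))
    (max_eq_left ?_) (fun τ => max_le hAB ?_) (fun τ => abs_le.2 ⟨?_, ?_⟩) h1
  · have : runningMax R 0 ≤ R 0 :=
      runningMax_le fun u hu => by rw [le_antisymm hu unitInterval.nonneg']
    linarith [(abs_le.1 h0).2]
  · linarith [runningMax_le (τ := τ) fun u _ => (hR u).2]
  · linarith [le_max_right A (runningMax R τ - δ), le_runningMax hRc τ]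
  · have : runningMax R τ ≤ R τ + 2 * δ := runningMax_le fun u hu => by linarith [hRinc u τ hu]
    have := max_le (a := A) (b := runningMax R τ - δ) (c := R τ + δ) (by linarith [(hR τ).1])
      (by linarith)
    linarith

theorem frechetDist_segCurve_le_of_noInnerVisits {δ : ℝ} {m k : ℕ} (hm : 0 < m) (hk : 0 < k)
    {p : Fin (m + 1) → ℝ} {q : Fin (k + 1) → ℝ} {f g : unitInterval → unitInterval}
    (hT : IsTraversal δ (polyCurve m p) (polyCurve k q) f g)
    (hQr : ∀ s, polyCurve k q s ∈ Set.Icc (q 0) (q (Fin.last k)))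
    (hnv : NoInnerVisits δ m k p q f g) :
    frechetDist (segCurve (q 0) (q (Fin.last k))) (polyCurve k q) ≤ δ ∧
      frechetDist (segCurve (q 0) (q (Fin.last k))) (polyCurve m p) ≤ δ := by
  have hδ := hT.nonneg
  have hq : ∀ i, q 0 ≤ q i ∧ q i ≤ q (Fin.last k) := fun i => by
    simpa [polyCurve_vparam hk] using hQr (vparam k i)
  have hQinc := approxInc_polyCurve q hk (hT.right_vertex_drop_le hm hk hq hnv)
  have hPinc := approxInc_polyCurve p hm (hT.left_vertex_drop_le hm hk hQr hQinc hnv)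
  have h0 := hT.abs_sub_le_zero
  have h1 := hT.abs_sub_le_one
  rw [polyCurve_zero hk] at h0
  rw [polyCurve_one hk] at h1
  refine ⟨frechetDist_segCurve_le (continuous_polyCurve hk q) hQinc (hq 0).2
    (by simp [polyCurve_zero hk, hδ]) (by simp [polyCurve_one hk, hδ])
    fun t => Set.Icc_subset_Icc (by linarith) (by linarith) (hQr t),
    frechetDist_segCurve_le (continuous_polyCurve hm p) hPinc (hq 0).2 h0 h1 (hT.mem_Icc_left hQr)⟩

theorem segment_simplification_of_no_inner_visits_general (δ : ℝ)
    (m k : ℕ) (hm : 0 < m) (hk : 0 < k)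
    (p : Fin (m + 1) → ℝ) (q : Fin (k + 1) → ℝ)
    (f g : unitInterval → unitInterval)
    (hfm : Monotone f) (hgm : Monotone g)
    (hfs : Function.Surjective f) (hgs : Function.Surjective g)
    (hreal : ∀ t : unitInterval, |polyCurve m p (f t) - polyCurve k q (g t)| ≤ δ)
    (hQr : ∀ s : unitInterval, polyCurve k q s ∈ Set.uIcc (q 0) (q (Fin.last k)))
    (hnv : ∀ (j : Fin (k + 1)) (a : Fin (m + 1)),
      0 < (j : ℕ) → (j : ℕ) < k → 0 < (a : ℕ) → (a : ℕ) < m →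
        ¬ Visits δ m k p q f g j a) :
    frechetDist (segCurve (q 0) (q (Fin.last k))) (polyCurve k q) ≤ δ ∧
    (∀ s : unitInterval, polyCurve k q s ∈ Set.uIcc (q 0) (q (Fin.last k))) ∧
    frechetDist (segCurve (q 0) (q (Fin.last k))) (polyCurve m p) ≤ δ := by
  have hT : IsTraversal δ (polyCurve m p) (polyCurve k q) f g := ⟨hfm, hgm, hfs, hgs, hreal⟩
  rcases le_total (q 0) (q (Fin.last k)) with hle | hge
  · obtain ⟨hQ, hP⟩ := frechetDist_segCurve_le_of_noInnerVisits hm hk hT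
      (by simpa only [Set.uIcc_of_le hle] using hQr) hnv
    exact ⟨hQ, hQr, hP⟩
  · have hT' : IsTraversal δ (polyCurve m (-p)) (polyCurve k (-q)) f g := by
      rw [polyCurve_neg, polyCurve_neg]
      exact hT.neg
    obtain ⟨hQ, hP⟩ := frechetDist_segCurve_le_of_noInnerVisits hm hk hT'
      (fun s => by simpa [polyCurve_neg, Set.uIcc_of_ge hge, and_comm] using hQr s)
      (NoInnerVisits.neg hnv)
    simp only [Pi.neg_apply, segCurve_neg, polyCurve_neg, frechetDist_neg] at hQ hP
    exact ⟨hQ, hQr, hP⟩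

/-- If a monotone traversal realizes distance `δ` between the
polygonal curves `P` (on `p`) and `Q` (on `q`), `Q` stays in the interval spanned
by its endpoints, and no inner vertex of `Q` `δ`-visits an inner vertex of `P`,
then the segment `Q'` from `Q(0)` to `Q(1)` is a range-preserving
`δ`-simplification of `Q` with `d_F(Q', P) ≤ δ`. -/
theorem segment_simplification_of_no_inner_visits (δ : ℝ) (hδ : 0 < δ)
    (m k : ℕ) (hm : 0 < m) (hk : 0 < k)
    (p : Fin (m + 1) → ℝ) (q : Fin (k + 1) → ℝ)
    (f g : unitInterval → unitInterval)
    (hfc : Continuous f) (hgc : Continuous g)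
    (hfm : Monotone f) (hgm : Monotone g)
    (hfs : Function.Surjective f) (hgs : Function.Surjective g)
    (hreal : ∀ t : unitInterval, |polyCurve m p (f t) - polyCurve k q (g t)| ≤ δ)
    (hQr : ∀ s : unitInterval, polyCurve k q s ∈ Set.uIcc (q 0) (q (Fin.last k)))
    (hnv : ∀ (j : Fin (k + 1)) (a : Fin (m + 1)),
      0 < (j : ℕ) → (j : ℕ) < k → 0 < (a : ℕ) → (a : ℕ) < m →
        ¬ Visits δ m k p q f g j a) :
    frechetDist (segCurve (q 0) (q (Fin.last k))) (polyCurve k q) ≤ δ ∧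
    (∀ s : unitInterval, polyCurve k q s ∈ Set.uIcc (q 0) (q (Fin.last k))) ∧
    frechetDist (segCurve (q 0) (q (Fin.last k))) (polyCurve m p) ≤ δ :=
  segment_simplification_of_no_inner_visits_general δ m k hm hk p q f g hfm hgm hfs hgs hreal hQr
    hnv
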